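/- arXiv:2306.09908 — 4 statements merged into one kernel-verified Lean document; each statement's English description precedes it below -/
import Mathlib

section
/- Let G be a finite group acting linearly on a finite-dimensional vector space V over a finite field, let W ⊆ V be a G-invariant subspace, and let π : V → V/W be the quotient map. Then for every v ∈ V one has |G_{π(v)}| · |(v + W)/G_{π(v)}| ≤ |G| · |W/G|, where (v + W)/G_{π(v)} denotes the set of G_{π(v)}-orbits on the coset v + W and W/G the set of G-orbits on W. Consequently, if R ⊆ V is a set such that {π(v) : v ∈ R} is a complete and irredundant set of representatives for the G-orbits on V/W, then ∑_{v ∈ R} |G_{π(v)}| · |(v + W)/G_{π(v)}| ≤ |G| · |W/G| · |(V/W)/G|. -/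
open MulAction

/-- Card of the "set of labels" of `f` equals card of quotient, when label
equality matches a setoid. -/
lemma card_range_eq_card_quotient {X α : Type*} (s : Setoid X) (f : X → α)
    (h : ∀ x y, f x = f y ↔ s.r x y) :
    Nat.card {a : α // ∃ x, a = f x} = Nat.card (Quotient s) := by
  refine (Nat.card_congr (Equiv.ofBijective
    (Quotient.lift (fun x => (⟨f x, x, rfl⟩ : {a : α // ∃ x, a = f x}))
      (fun a b hab => Subtype.ext ((h a b).2 hab))) ⟨?_, ?_⟩)).symm
  · rintro ⟨a⟩ ⟨b⟩ hab
    exact Quotient.sound ((h a b).1 (congrArg Subtype.val hab))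
  · rintro ⟨a, x, rfl⟩
    exact ⟨⟦x⟧, rfl⟩

/-- Two orbit sets are equal iff the base points lie in the same orbit. -/
lemma orbit_set_eq_iff {G V : Type*} [Group G] [MulAction G V] (x y : V) :
    {z | ∃ g : G, g • x = z} = {z | ∃ g : G, g • y = z} ↔ ∃ g : G, g • y = x := by
  constructor
  · intro h
    have hx : x ∈ {z | ∃ g : G, g • x = z} := ⟨1, one_smul G x⟩
    rw [h] at hx
    exact hx
  · rintro ⟨g0, rfl⟩
    ext z
    constructor
    · rintro ⟨g, rfl⟩
      exact ⟨g * g0, (mul_smul g g0 y).symm ▸ rfl⟩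
    · rintro ⟨g, rfl⟩
      exact ⟨g * g0⁻¹, by rw [mul_smul, inv_smul_smul]⟩

/-- Core Burnside-comparison inequality. -/
lemma core_bound {G : Type*} [Group G] [Finite G] {X Y : Type*} [Finite X] [Finite Y]
    [MulAction G Y] (H : Subgroup G) [MulAction H X]
    (hfix : ∀ h : H, Nat.card (fixedBy X h) ≤ Nat.card (fixedBy Y (h : G))) :
    Nat.card H * Nat.card (Quotient (orbitRel H X)) ≤
      Nat.card G * Nat.card (Quotient (orbitRel G Y)) := by
  classical
  cases nonempty_fintype G
  cases nonempty_fintype X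
  cases nonempty_fintype Y
  have h1 : (∑ a : H, Fintype.card (fixedBy X a)) =
      Fintype.card (Quotient (orbitRel H X)) * Fintype.card H :=
    sum_card_fixedBy_eq_card_orbits_mul_card_group H X
  have h2 : (∑ a : G, Fintype.card (fixedBy Y a)) =
      Fintype.card (Quotient (orbitRel G Y)) * Fintype.card G :=
    sum_card_fixedBy_eq_card_orbits_mul_card_group G Y
  have step1 : (∑ a : H, Fintype.card (fixedBy X a)) ≤
      ∑ a : H, Fintype.card (fixedBy Y (a : G)) := by
    refine Finset.sum_le_sum fun a _ => ?_
    have := hfix a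
    simpa [Nat.card_eq_fintype_card] using this
  have step2 : (∑ a : H, Fintype.card (fixedBy Y (a : G))) ≤
      ∑ a : G, Fintype.card (fixedBy Y a) := by
    have himg : (∑ g ∈ Finset.univ.image (fun a : H => (a : G)), Fintype.card (fixedBy Y g)) =
        ∑ a : H, Fintype.card (fixedBy Y (a : G)) := by
      refine Finset.sum_image ?_
      intro a _ b _ hab
      exact Subtype.ext hab
    rw [← himg]
    exact Finset.sum_le_sum_of_subset (Finset.subset_univ _)
  simp only [Nat.card_eq_fintype_card]
  calc Fintype.card H * Fintype.card (Quotient (orbitRel H X))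
      = ∑ a : H, Fintype.card (fixedBy X a) := by rw [h1, mul_comm]
    _ ≤ ∑ a : G, Fintype.card (fixedBy Y a) := le_trans step1 step2
    _ = Fintype.card G * Fintype.card (Quotient (orbitRel G Y)) := by rw [h2, mul_comm]

/-- Let a finite group `G` act linearly on a finite-dimensional vector
space `V` over a finite field `k`, let `W` be a `G`-invariant subspace and
`π : V → V ⧸ W` the quotient map.  For every `v ∈ V`,
`|G_{π v}| ⬝ |(v + W)/G_{π v}| ≤ |G| ⬝ |W/G|`; consequently, if `R ⊆ V` is such that
`{π v : v ∈ R}` is a complete and irredundant set of representatives for the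
`G`-orbits on `V ⧸ W`, then
`∑_{v ∈ R} |G_{π v}| ⬝ |(v + W)/G_{π v}| ≤ |G| ⬝ |W/G| ⬝ |(V ⧸ W)/G|`.
Here orbit spaces are encoded as the sets of orbits (as subsets), and the stabilizer
`G_{π v}` as the set of `g ∈ G` fixing `π v`. -/
theorem filtration_runtime_bound
    {k V G : Type*} [Field k] [Finite k] [AddCommGroup V] [Module k V]
    [FiniteDimensional k V] [Group G] [Finite G]
    [DistribMulAction G V] [SMulCommClass G k V]
    (W : Submodule k V) (hW : ∀ (g : G), ∀ w ∈ W, g • w ∈ W) :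
    (∀ v : V,
      Nat.card {g : G |
          (Submodule.Quotient.mk (g • v) : V ⧸ W) = Submodule.Quotient.mk v} *
        Nat.card {s : Set V | ∃ x, x - v ∈ W ∧
          s = {y | ∃ g : G,
            (Submodule.Quotient.mk (g • v) : V ⧸ W) = Submodule.Quotient.mk v ∧
              g • x = y}} ≤
      Nat.card G * Nat.card {s : Set V | ∃ w ∈ W, s = {y | ∃ g : G, g • w = y}}) ∧
    (∀ R : Finset V,
      (∀ u : V ⧸ W,
        ∃! v, v ∈ R ∧ ∃ g : G, (Submodule.Quotient.mk (g • v) : V ⧸ W) = u) →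
      (∑ v ∈ R,
        Nat.card {g : G |
            (Submodule.Quotient.mk (g • v) : V ⧸ W) = Submodule.Quotient.mk v} *
          Nat.card {s : Set V | ∃ x, x - v ∈ W ∧
            s = {y | ∃ g : G,
              (Submodule.Quotient.mk (g • v) : V ⧸ W) = Submodule.Quotient.mk v ∧
                g • x = y}}) ≤
      Nat.card G * Nat.card {s : Set V | ∃ w ∈ W, s = {y | ∃ g : G, g • w = y}} *
        Nat.card {s : Set (V ⧸ W) | ∃ x : V,
          s = {u | ∃ g : G, (Submodule.Quotient.mk (g • x) : V ⧸ W) = u}}) := by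
  haveI hVfin : Finite V := Module.finite_of_finite k
  -- the action of `G` preserves the quotient-map fibers
  have hact : ∀ (g : G) (a b : V),
      (Submodule.Quotient.mk a : V ⧸ W) = Submodule.Quotient.mk b →
      (Submodule.Quotient.mk (g • a) : V ⧸ W) = Submodule.Quotient.mk (g • b) := by
    intro g a b h
    rw [Submodule.Quotient.eq] at h ⊢
    simpa [smul_sub] using hW g _ h
  -- the action of `G` on `W`
  letI actW : MulAction G W :=
    { smul := fun g w => ⟨g • (w : V), hW g _ w.2⟩
      one_smul := fun w => Subtype.ext (one_smul G (w : V))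
      mul_smul := fun a b w => Subtype.ext (mul_smul a b (w : V)) }
  have key : ∀ v : V,
      Nat.card {g : G |
          (Submodule.Quotient.mk (g • v) : V ⧸ W) = Submodule.Quotient.mk v} *
        Nat.card {s : Set V | ∃ x, x - v ∈ W ∧
          s = {y | ∃ g : G,
            (Submodule.Quotient.mk (g • v) : V ⧸ W) = Submodule.Quotient.mk v ∧
              g • x = y}} ≤
      Nat.card G * Nat.card {s : Set V | ∃ w ∈ W, s = {y | ∃ g : G, g • w = y}} := by
    intro v
    -- the stabilizer of `π v` as a subgroup
    set H : Subgroup G :=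
      { carrier := {g : G |
          (Submodule.Quotient.mk (g • v) : V ⧸ W) = Submodule.Quotient.mk v}
        one_mem' := by simp
        mul_mem' := by
          intro a b ha hb
          show (Submodule.Quotient.mk ((a * b) • v) : V ⧸ W) = Submodule.Quotient.mk v
          rw [mul_smul]
          exact (hact a _ _ hb).trans ha
        inv_mem' := by
          intro a ha
          show (Submodule.Quotient.mk (a⁻¹ • v) : V ⧸ W) = Submodule.Quotient.mk v
          have := hact a⁻¹ _ _ ha
          rw [inv_smul_smul] at this
          exact this.symm
        } with hH
    -- the coset `v + W`
    set X : Type _ := {x : V // x - v ∈ W} with hX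
    letI actX : MulAction H X :=
      { smul := fun h x => ⟨(h : G) • (x : V), by
          have h1 : (h : G) • (x : V) - (h : G) • v ∈ W := by
            simpa [smul_sub] using hW (h : G) _ x.2
          have h2 : (h : G) • v - v ∈ W := (Submodule.Quotient.eq W).1 h.2
          simpa using W.add_mem h1 h2⟩
        one_smul := fun x => Subtype.ext (by
          show ((1 : H) : G) • (x : V) = (x : V)
          simp)
        mul_smul := fun a b x => Subtype.ext (by
          show ((a * b : H) : G) • (x : V) = (a : G) • ((b : G) • (x : V))
          rw [Subgroup.coe_mul, mul_smul]) }
    have hsmulX : ∀ (h : H) (x : X), ((h • x : X) : V) = (h : G) • (x : V) := fun _ _ => rfl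
    -- fixed point comparison
    have hfix : ∀ h : H, Nat.card (fixedBy X h) ≤ Nat.card (fixedBy W (h : G)) := by
      intro h
      rcases isEmpty_or_nonempty (fixedBy X h) with he | ⟨⟨x0, hx0⟩⟩
      · simp [Nat.card_of_isEmpty]
      · refine Nat.card_le_card_of_injective
          (fun x => (⟨⟨(x : X).1 - x0.1, by
            have := W.sub_mem (x : X).2 x0.2
            simpa using this⟩, by
            show (h : G) • (⟨(x : X).1 - x0.1, _⟩ : W) = _
            refine Subtype.ext ?_
            show (h : G) • ((x : X).1 - x0.1) = (x : X).1 - x0.1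
            have e1 : (h : G) • (x : X).1 = (x : X).1 := congrArg Subtype.val x.2
            have e0 : (h : G) • x0.1 = x0.1 := congrArg Subtype.val hx0
            rw [smul_sub, e1, e0]⟩ : fixedBy W (h : G))) ?_
        intro a b hab
        have : (a : X).1 - x0.1 = (b : X).1 - x0.1 :=
          congrArg Subtype.val (congrArg Subtype.val hab)
        exact Subtype.ext (Subtype.ext (by linear_combination (norm := abel) this))
    have hcore := core_bound (X := X) (Y := W) H hfix
    -- identify the stabilizer cardinality
    have cardH : Nat.card {g : G |
        (Submodule.Quotient.mk (g • v) : V ⧸ W) = Submodule.Quotient.mk v} = Nat.card H := rfl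
    -- identify the orbit-space cardinality on the coset
    have cardX : Nat.card {s : Set V | ∃ x, x - v ∈ W ∧
        s = {y | ∃ g : G,
          (Submodule.Quotient.mk (g • v) : V ⧸ W) = Submodule.Quotient.mk v ∧
            g • x = y}} = Nat.card (Quotient (orbitRel H X)) := by
      have e1 : Nat.card {s : Set V | ∃ x, x - v ∈ W ∧
          s = {y | ∃ g : G,
            (Submodule.Quotient.mk (g • v) : V ⧸ W) = Submodule.Quotient.mk v ∧
              g • x = y}} =
          Nat.card {s : Set V // ∃ x : X,
            s = {y | ∃ hh : H, (hh : G) • (x : V) = y}} := by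
        refine Nat.card_congr (Equiv.subtypeEquivRight fun s => ?_)
        constructor
        · rintro ⟨x, hx, rfl⟩
          refine ⟨⟨x, hx⟩, ?_⟩
          ext z
          constructor
          · rintro ⟨g, hg, rfl⟩
            exact ⟨⟨g, hg⟩, rfl⟩
          · rintro ⟨hh, rfl⟩
            exact ⟨(hh : G), hh.2, rfl⟩
        · rintro ⟨x, rfl⟩
          refine ⟨(x : V), x.2, ?_⟩
          ext z
          constructor
          · rintro ⟨hh, rfl⟩
            exact ⟨(hh : G), hh.2, rfl⟩
          · rintro ⟨g, hg, rfl⟩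
            exact ⟨⟨g, hg⟩, rfl⟩
      rw [e1]
      refine card_range_eq_card_quotient (orbitRel H X)
        (fun x : X => {y | ∃ hh : H, (hh : G) • (x : V) = y}) ?_
      intro x y
      constructor
      · intro hf
        have h1 : {z : V | ∃ hh : H, hh • (x : V) = z} =
            {z : V | ∃ hh : H, hh • (y : V) = z} := hf
        obtain ⟨hh, hhy⟩ := (orbit_set_eq_iff (G := H) (V := V) (x : V) (y : V)).1 h1
        exact mem_orbit_iff.2 ⟨hh, Subtype.ext hhy⟩
      · intro hr
        obtain ⟨hh, hhy⟩ := mem_orbit_iff.1 hr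
        have h1 := (orbit_set_eq_iff (G := H) (V := V) (x : V) (y : V)).2
          ⟨hh, congrArg Subtype.val hhy⟩
        exact h1
    -- identify the orbit-space cardinality on `W`
    have cardW : Nat.card {s : Set V | ∃ w ∈ W, s = {y | ∃ g : G, g • w = y}} =
        Nat.card (Quotient (orbitRel G W)) := by
      have e1 : Nat.card {s : Set V | ∃ w ∈ W, s = {y | ∃ g : G, g • w = y}} =
          Nat.card {s : Set V // ∃ w : W, s = {y | ∃ g : G, g • (w : V) = y}} := by
        refine Nat.card_congr (Equiv.subtypeEquivRight fun s => ?_)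
        constructor
        · rintro ⟨w, hw, rfl⟩
          exact ⟨⟨w, hw⟩, rfl⟩
        · rintro ⟨w, rfl⟩
          exact ⟨(w : V), w.2, rfl⟩
      rw [e1]
      refine card_range_eq_card_quotient (orbitRel G W)
        (fun w : W => {y | ∃ g : G, g • (w : V) = y}) ?_
      intro x y
      constructor
      · intro hf
        have h1 : {z : V | ∃ g : G, g • (x : V) = z} =
            {z : V | ∃ g : G, g • (y : V) = z} := hf
        obtain ⟨g, hg⟩ := (orbit_set_eq_iff (G := G) (V := V) (x : V) (y : V)).1 h1
        exact mem_orbit_iff.2 ⟨g, Subtype.ext hg⟩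
      · intro hr
        obtain ⟨g, hg⟩ := mem_orbit_iff.1 hr
        have h1 := (orbit_set_eq_iff (G := G) (V := V) (x : V) (y : V)).2
          ⟨g, congrArg Subtype.val hg⟩
        exact h1
    rw [cardH, cardX, cardW]
    exact hcore
  refine ⟨key, ?_⟩
  intro R hR
  set C := Nat.card G * Nat.card {s : Set V | ∃ w ∈ W, s = {y | ∃ g : G, g • w = y}} with hC
  have hsum : (∑ v ∈ R,
      Nat.card {g : G |
          (Submodule.Quotient.mk (g • v) : V ⧸ W) = Submodule.Quotient.mk v} *
        Nat.card {s : Set V | ∃ x, x - v ∈ W ∧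
          s = {y | ∃ g : G,
            (Submodule.Quotient.mk (g • v) : V ⧸ W) = Submodule.Quotient.mk v ∧
              g • x = y}}) ≤ ∑ _v ∈ R, C :=
    Finset.sum_le_sum fun v _ => key v
  have hcardR : R.card = Nat.card {s : Set (V ⧸ W) | ∃ x : V,
      s = {u | ∃ g : G, (Submodule.Quotient.mk (g • x) : V ⧸ W) = u}} := by
    have hbij : Function.Bijective (fun v : {v // v ∈ R} =>
        (⟨{u | ∃ g : G, (Submodule.Quotient.mk (g • (v : V)) : V ⧸ W) = u}, (v : V), rfl⟩ :
          {s : Set (V ⧸ W) | ∃ x : V,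
            s = {u | ∃ g : G, (Submodule.Quotient.mk (g • x) : V ⧸ W) = u}})) := by
      constructor
      · intro a b hab
        have hsets : {u | ∃ g : G, (Submodule.Quotient.mk (g • (a : V)) : V ⧸ W) = u} =
            {u | ∃ g : G, (Submodule.Quotient.mk (g • (b : V)) : V ⧸ W) = u} :=
          congrArg Subtype.val hab
        have hb' : (Submodule.Quotient.mk ((b : V)) : V ⧸ W) ∈
            {u | ∃ g : G, (Submodule.Quotient.mk (g • (a : V)) : V ⧸ W) = u} := by
          rw [hsets]
          exact ⟨1, by simp⟩
        obtain ⟨g, hg⟩ := hb'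
        obtain ⟨w, hw, huniq⟩ := hR (Submodule.Quotient.mk (b : V))
        have ha' : (a : V) = w := huniq _ ⟨a.2, g, hg⟩
        have hb'' : (b : V) = w := huniq _ ⟨b.2, 1, by simp⟩
        exact Subtype.ext (ha'.trans hb''.symm)
      · rintro ⟨s, x, rfl⟩
        obtain ⟨w, ⟨hwR, g, hg⟩, _⟩ := hR (Submodule.Quotient.mk x)
        refine ⟨⟨w, hwR⟩, ?_⟩
        refine Subtype.ext ?_
        show {u | ∃ g : G, (Submodule.Quotient.mk (g • w) : V ⧸ W) = u} =
          {u | ∃ g : G, (Submodule.Quotient.mk (g • x) : V ⧸ W) = u}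
        ext u
        constructor
        · rintro ⟨g', rfl⟩
          refine ⟨g' * g⁻¹, ?_⟩
          have h1 : (Submodule.Quotient.mk (g⁻¹ • x) : V ⧸ W) = Submodule.Quotient.mk w := by
            have := hact g⁻¹ _ _ hg
            rw [inv_smul_smul] at this
            exact this.symm
          have := hact g' _ _ h1
          rwa [← mul_smul] at this
        · rintro ⟨g', rfl⟩
          refine ⟨g' * g, ?_⟩
          have := hact g' _ _ hg
          rwa [← mul_smul] at this
    calc R.card = Nat.card {v // v ∈ R} := by simp [Nat.card_eq_fintype_card]
      _ = _ := Nat.card_congr (Equiv.ofBijective _ hbij)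
  calc (∑ v ∈ R, _) ≤ ∑ _v ∈ R, C := hsum
    _ = R.card * C := by rw [Finset.sum_const, smul_eq_mul]
    _ = C * R.card := mul_comm _ _
    _ = _ := by rw [hcardR, hC, mul_assoc]
end

section
/- Let V be the 56-dimensional F_2-vector space of homogeneous cubic forms in F_2[x_0, …, x_5], let W_1 ⊆ V be the F_2-linear span of the cubes ℓ^3 of linear forms ℓ, and let W_2 ⊆ V be the F_2-linear span of the set of products ℓ_1 · ℓ_2^2 where ℓ_1 and ℓ_2 are linear forms. Then W_2 is invariant under the action of GL_6(F_2) by linear substitution of the variables, W_1 ⊆ W_2, and dim_{F_2} W_2 = 36. -/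
open MvPolynomial

/-- The action of a matrix `A` on a polynomial by linear substitution of the
variables: `(linSub A f) = f ∘ A`, i.e. `x i ↦ ∑ j, A i j * x j`. -/
noncomputable def linSub {R : Type*} [CommSemiring R] {m : ℕ}
    (A : Matrix (Fin m) (Fin m) R) (f : MvPolynomial (Fin m) R) :
    MvPolynomial (Fin m) R :=
  MvPolynomial.aeval (fun i => ∑ j, MvPolynomial.C (A i j) * MvPolynomial.X j) f

/-- `W₁`: the `F₂`-linear span of the cubes `ℓ^3` of linear forms
`ℓ ∈ F₂[x₀, …, x₅]`. -/
noncomputable def WaringSpan : Submodule (ZMod 2) (MvPolynomial (Fin 6) (ZMod 2)) :=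
  Submodule.span (ZMod 2)
    {f | ∃ ℓ : MvPolynomial (Fin 6) (ZMod 2), ℓ.IsHomogeneous 1 ∧ f = ℓ ^ 3}

/-- `W₂`: the `F₂`-linear span of the products `ℓ₁ · ℓ₂²` of linear forms
`ℓ₁, ℓ₂ ∈ F₂[x₀, …, x₅]`. -/
noncomputable def WaringSpan₂ : Submodule (ZMod 2) (MvPolynomial (Fin 6) (ZMod 2)) :=
  Submodule.span (ZMod 2)
    {f | ∃ ℓ₁ ℓ₂ : MvPolynomial (Fin 6) (ZMod 2),
      ℓ₁.IsHomogeneous 1 ∧ ℓ₂.IsHomogeneous 1 ∧ f = ℓ₁ * ℓ₂ ^ 2}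

section Aux

local notation "P" => MvPolynomial (Fin 6) (ZMod 2)

/-- The span of the 36 monomials `x_i x_j²`. -/
noncomputable def Mspan : Submodule (ZMod 2) (MvPolynomial (Fin 6) (ZMod 2)) :=
  Submodule.span (ZMod 2)
    (Set.range fun p : Fin 6 × Fin 6 => (X p.1 : P) * X p.2 ^ 2)

lemma degree_one_eq_single {m : Fin 6 →₀ ℕ} (hm : m.degree = 1) :
    ∃ i, m = Finsupp.single i 1 := by
  have hcard : m.support.card = 1 := by
    have h1 : m.support.card ≤ m.degree := by
      unfold Finsupp.degree
      calc m.support.card = ∑ _i ∈ m.support, 1 := by simp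
        _ ≤ ∑ i ∈ m.support, m i := by
            apply Finset.sum_le_sum
            intro i hi
            exact Nat.one_le_iff_ne_zero.2 (Finsupp.mem_support_iff.1 hi)
    have h0 : m.support.card ≠ 0 := by
      intro h
      rw [Finset.card_eq_zero] at h
      simp [Finsupp.degree_apply, h] at hm
    omega
  obtain ⟨i, hi⟩ := Finset.card_eq_one.1 hcard
  obtain ⟨-, h2⟩ := Finsupp.support_eq_singleton.1 hi
  refine ⟨i, ?_⟩
  have : m i = 1 := by
    have := hm
    rw [Finsupp.degree_apply, hi, Finset.sum_singleton] at this
    exact this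
  rwa [this] at h2

lemma homog1_mem_spanX {ℓ : P} (h : ℓ.IsHomogeneous 1) :
    ℓ ∈ Submodule.span (ZMod 2) (Set.range (X : Fin 6 → P)) := by
  rw [← ℓ.support_sum_monomial_coeff]
  apply Submodule.sum_mem
  intro m hm
  have hc : coeff m ℓ ≠ 0 := MvPolynomial.mem_support_iff.1 hm
  have hd : m.degree = 1 := by
    rw [Finsupp.degree_eq_weight_one]
    exact h hc
  obtain ⟨i, rfl⟩ := degree_one_eq_single hd
  have : (monomial (Finsupp.single i 1) (coeff (Finsupp.single i 1) ℓ) : P)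
      = coeff (Finsupp.single i 1) ℓ • X i := by
    rw [MvPolynomial.smul_eq_C_mul, MvPolynomial.C_mul_X_eq_monomial]
  rw [this]
  exact Submodule.smul_mem _ _ (Submodule.subset_span ⟨i, rfl⟩)

lemma sq_mem_spanX2 {ℓ : P}
    (h : ℓ ∈ Submodule.span (ZMod 2) (Set.range (X : Fin 6 → P))) :
    ℓ ^ 2 ∈ Submodule.span (ZMod 2) (Set.range fun j : Fin 6 => (X j : P) ^ 2) := by
  induction h using Submodule.span_induction with
  | mem x hx =>
      obtain ⟨i, rfl⟩ := hx
      exact Submodule.subset_span ⟨i, rfl⟩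
  | zero => simpa using Submodule.zero_mem _
  | add a b _ _ ha hb =>
      have : (a + b) ^ 2 = a ^ 2 + b ^ 2 := CharTwo.add_sq a b
      rw [this]; exact Submodule.add_mem _ ha hb
  | smul c a _ ha =>
      rw [smul_pow]
      exact Submodule.smul_mem _ _ ha

lemma keyProd {a b : P}
    (ha : a ∈ Submodule.span (ZMod 2) (Set.range (X : Fin 6 → P)))
    (hb : b ∈ Submodule.span (ZMod 2) (Set.range (X : Fin 6 → P))) :
    a * b ^ 2 ∈ Mspan := by
  have hb2 := sq_mem_spanX2 hb
  have hmul := Submodule.mul_mem_mul ha hb2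
  rw [Submodule.span_mul_span] at hmul
  refine Submodule.span_le.2 ?_ hmul
  rintro _ ⟨x, ⟨i, rfl⟩, y, ⟨j, rfl⟩, rfl⟩
  exact Submodule.subset_span ⟨(i, j), rfl⟩

lemma Mspan_eq : Mspan = WaringSpan₂ := by
  apply le_antisymm
  · apply Submodule.span_le.2
    rintro _ ⟨⟨i, j⟩, rfl⟩
    exact Submodule.subset_span ⟨X i, X j, isHomogeneous_X _ _, isHomogeneous_X _ _, rfl⟩
  · apply Submodule.span_le.2
    rintro _ ⟨ℓ₁, ℓ₂, h1, h2, rfl⟩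
    exact keyProd (homog1_mem_spanX h1) (homog1_mem_spanX h2)

lemma e_inj : Function.Injective
    (fun p : Fin 6 × Fin 6 => Finsupp.single p.1 1 + Finsupp.single p.2 (2:ℕ)) := by
  have hE : Function.Injective (fun p : Fin 6 × Fin 6 =>
      fun k : Fin 6 => (if p.1 = k then (1:ℕ) else 0) + (if p.2 = k then 2 else 0)) := by
    decide
  intro p q h
  apply hE
  funext k
  have := DFunLike.congr_fun h k
  simpa [Finsupp.single_apply] using this

lemma finrank_Mspan : Module.finrank (ZMod 2) Mspan = 36 := by
  have hfun : (fun p : Fin 6 × Fin 6 => (X p.1 : P) * X p.2 ^ 2)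
      = (fun d : Fin 6 →₀ ℕ => (monomial d (1 : ZMod 2) : P)) ∘
        (fun p : Fin 6 × Fin 6 => Finsupp.single p.1 1 + Finsupp.single p.2 (2:ℕ)) := by
    funext p
    simp only [Function.comp]
    rw [X_pow_eq_monomial, X, monomial_mul, one_mul]
  have hli : LinearIndependent (ZMod 2)
      (fun p : Fin 6 × Fin 6 => (X p.1 : P) * X p.2 ^ 2) := by
    rw [hfun]
    have hb := (basisMonomials (Fin 6) (ZMod 2)).linearIndependent
    rw [coe_basisMonomials] at hb
    exact hb.comp _ e_inj
  have := finrank_span_eq_card hli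
  rw [Mspan, this]
  simp

end Aux

/-- The span `W₂` of products `ℓ₁ ℓ₂²` of linear forms in
`F₂[x₀, …, x₅]` is invariant under the action of `GL₆(F₂)` by linear substitution
of the variables, it contains `W₁`, and `dim_{F₂} W₂ = 36`. -/
theorem waringSpan₂_invariant_contains_and_dim :
    (∀ g : GL (Fin 6) (ZMod 2), ∀ f ∈ WaringSpan₂,
      linSub (g : Matrix (Fin 6) (Fin 6) (ZMod 2)) f ∈ WaringSpan₂) ∧
    WaringSpan ≤ WaringSpan₂ ∧
    Module.finrank (ZMod 2) WaringSpan₂ = 36 := by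
  refine ⟨?_, ?_, ?_⟩
  · intro g f hf
    set A : Matrix (Fin 6) (Fin 6) (ZMod 2) := (g : Matrix (Fin 6) (Fin 6) (ZMod 2))
    have hX : ∀ ℓ : MvPolynomial (Fin 6) (ZMod 2),
        ℓ ∈ Submodule.span (ZMod 2) (Set.range X) →
        linSub A ℓ ∈ Submodule.span (ZMod 2) (Set.range X) := by
      intro ℓ hℓ
      induction hℓ using Submodule.span_induction with
      | mem x hx =>
          obtain ⟨i, rfl⟩ := hx
          show aeval _ (X i) ∈ _
          rw [aeval_X]
          apply Submodule.sum_mem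
          intro j _
          rw [← MvPolynomial.smul_eq_C_mul]
          exact Submodule.smul_mem _ _ (Submodule.subset_span ⟨j, rfl⟩)
      | zero => simpa [linSub] using Submodule.zero_mem _
      | add a b _ _ ha hb =>
          show aeval _ (a + b) ∈ _
          rw [map_add]; exact Submodule.add_mem _ ha hb
      | smul c a _ ha =>
          show aeval _ (c • a) ∈ _
          rw [map_smul]; exact Submodule.smul_mem _ _ ha
    induction hf using Submodule.span_induction with
    | mem x hx =>
        obtain ⟨ℓ₁, ℓ₂, h1, h2, rfl⟩ := hx
        have : linSub A (ℓ₁ * ℓ₂ ^ 2) = linSub A ℓ₁ * (linSub A ℓ₂) ^ 2 := by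
          show aeval _ _ = _
          rw [map_mul, map_pow]; rfl
        rw [this, ← Mspan_eq]
        exact keyProd (hX _ (homog1_mem_spanX h1)) (hX _ (homog1_mem_spanX h2))
    | zero => simpa [linSub] using Submodule.zero_mem _
    | add a b _ _ ha hb =>
        show aeval _ (a + b) ∈ _
        rw [map_add]; exact Submodule.add_mem _ ha hb
    | smul c a _ ha =>
        show aeval _ (c • a) ∈ _
        rw [map_smul]; exact Submodule.smul_mem _ _ ha
  · apply Submodule.span_le.2
    rintro _ ⟨ℓ, h, rfl⟩
    have : ℓ ^ 3 = ℓ * ℓ ^ 2 := by ring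
    rw [this]
    exact Submodule.subset_span ⟨ℓ, ℓ, h, h, rfl⟩
  · rw [← Mspan_eq]
    exact finrank_Mspan
end

section
/- Let V be the 35-dimensional F_2-vector space of homogeneous quartic forms in F_2[x_0, x_1, x_2, x_3], and let W ⊆ V be the F_2-linear span of the set of quartics of the shape ℓ_1^3 ℓ_2 + ℓ_1 ℓ_2^3 where ℓ_1 and ℓ_2 are linear forms. Then W is invariant under the action of GL_4(F_2) by linear substitution of the variables, and dim_{F_2} W = 20. -/
open MvPolynomial

/-- `W`: the `F₂`-linear span of the quartics `ℓ₁³ ℓ₂ + ℓ₁ ℓ₂³` for linear forms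
`ℓ₁, ℓ₂ ∈ F₂[x₀, x₁, x₂, x₃]`. -/
noncomputable def QuarticSpan : Submodule (ZMod 2) (MvPolynomial (Fin 4) (ZMod 2)) :=
  Submodule.span (ZMod 2)
    {f | ∃ ℓ₁ ℓ₂ : MvPolynomial (Fin 4) (ZMod 2),
      ℓ₁.IsHomogeneous 1 ∧ ℓ₂.IsHomogeneous 1 ∧ f = ℓ₁ ^ 3 * ℓ₂ + ℓ₁ * ℓ₂ ^ 3}

/- ### Auxiliary definitions and lemmas -/

abbrev PP := MvPolynomial (Fin 4) (ZMod 2)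

lemma two_eq_zero : (2 : PP) = 0 := by simpa using CharP.cast_eq_zero PP 2

lemma deg_one_single (d : Fin 4 →₀ ℕ) (h : d.degree = 1) : ∃ i, d = Finsupp.single i 1 := by
  have hd : d.degree = d 0 + d 1 + d 2 + d 3 := by
    rw [Finsupp.degree_apply, Finset.sum_subset (Finset.subset_univ d.support)]
    · simp [Fin.sum_univ_four]
    · intro x _ hx; simpa using Finsupp.notMem_support_iff.mp hx
  rw [hd] at h
  have h' : (d 0 = 1 ∧ d 1 = 0 ∧ d 2 = 0 ∧ d 3 = 0) ∨ (d 0 = 0 ∧ d 1 = 1 ∧ d 2 = 0 ∧ d 3 = 0)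
      ∨ (d 0 = 0 ∧ d 1 = 0 ∧ d 2 = 1 ∧ d 3 = 0) ∨ (d 0 = 0 ∧ d 1 = 0 ∧ d 2 = 0 ∧ d 3 = 1) := by
    omega
  rcases h' with h' | h' | h' | h'
  · exact ⟨0, by ext j; fin_cases j <;> simp [Finsupp.single_apply, h'.1, h'.2.1, h'.2.2.1, h'.2.2.2]⟩
  · exact ⟨1, by ext j; fin_cases j <;> simp [Finsupp.single_apply, h'.1, h'.2.1, h'.2.2.1, h'.2.2.2]⟩
  · exact ⟨2, by ext j; fin_cases j <;> simp [Finsupp.single_apply, h'.1, h'.2.1, h'.2.2.1, h'.2.2.2]⟩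
  · exact ⟨3, by ext j; fin_cases j <;> simp [Finsupp.single_apply, h'.1, h'.2.1, h'.2.2.1, h'.2.2.2]⟩

lemma homog1_eq_sum {ℓ : PP} (h : ℓ.IsHomogeneous 1) :
    ℓ = ∑ i, C (coeff (Finsupp.single i 1) ℓ) * X i := by
  ext d
  rw [coeff_sum]
  simp only [coeff_C_mul, coeff_X']
  by_cases hd : ∃ i, d = Finsupp.single i 1
  · obtain ⟨i, rfl⟩ := hd
    rw [Finset.sum_eq_single i]
    · simp
    · intro j _ hj
      rw [if_neg, mul_zero]
      intro hc
      rcases (Finsupp.single_eq_single_iff _ _ _ _).mp hc with ⟨h1, _⟩ | ⟨h1, _⟩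
      · exact hj h1
      · exact absurd h1 one_ne_zero
    · simp
  · rw [Finset.sum_eq_zero, h.coeff_eq_zero]
    · intro hdeg
      exact hd (deg_one_single d hdeg)
    · intro j _
      rw [if_neg, mul_zero]
      intro hc
      exact hd ⟨j, hc.symm⟩

/-- `Qg i j k = xᵢ xⱼ (xᵢ + xⱼ) xₖ` (in char 2). -/
noncomputable def Qg (i j k : Fin 4) : PP := X i ^ 2 * X j * X k + X i * X j ^ 2 * X k

/-- Same expression with general polynomial slots. -/
noncomputable def Qp (l m n : PP) : PP := l ^ 2 * m * n + l * m ^ 2 * n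

noncomputable def Fb : Fin 20 → PP :=
  ![Qg 0 1 0, Qg 0 1 1, Qg 0 2 0, Qg 0 2 2, Qg 0 3 0, Qg 0 3 3, Qg 1 2 1, Qg 1 2 2, Qg 1 3 1, Qg 1 3 3, Qg 2 3 2, Qg 2 3 3, Qg 0 1 2, Qg 0 2 1, Qg 0 1 3, Qg 0 3 1, Qg 0 2 3, Qg 0 3 2, Qg 1 2 3, Qg 1 3 2]

noncomputable def V20 : Submodule (ZMod 2) PP := Submodule.span (ZMod 2) (Set.range Fb)

lemma fb0 : Qg 0 1 0 ∈ V20 := Submodule.subset_span ⟨0, rfl⟩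
lemma fb1 : Qg 0 1 1 ∈ V20 := Submodule.subset_span ⟨1, rfl⟩
lemma fb2 : Qg 0 2 0 ∈ V20 := Submodule.subset_span ⟨2, rfl⟩
lemma fb3 : Qg 0 2 2 ∈ V20 := Submodule.subset_span ⟨3, rfl⟩
lemma fb4 : Qg 0 3 0 ∈ V20 := Submodule.subset_span ⟨4, rfl⟩
lemma fb5 : Qg 0 3 3 ∈ V20 := Submodule.subset_span ⟨5, rfl⟩
lemma fb6 : Qg 1 2 1 ∈ V20 := Submodule.subset_span ⟨6, rfl⟩
lemma fb7 : Qg 1 2 2 ∈ V20 := Submodule.subset_span ⟨7, rfl⟩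
lemma fb8 : Qg 1 3 1 ∈ V20 := Submodule.subset_span ⟨8, rfl⟩
lemma fb9 : Qg 1 3 3 ∈ V20 := Submodule.subset_span ⟨9, rfl⟩
lemma fb10 : Qg 2 3 2 ∈ V20 := Submodule.subset_span ⟨10, rfl⟩
lemma fb11 : Qg 2 3 3 ∈ V20 := Submodule.subset_span ⟨11, rfl⟩
lemma fb12 : Qg 0 1 2 ∈ V20 := Submodule.subset_span ⟨12, rfl⟩
lemma fb13 : Qg 0 2 1 ∈ V20 := Submodule.subset_span ⟨13, rfl⟩
lemma fb14 : Qg 0 1 3 ∈ V20 := Submodule.subset_span ⟨14, rfl⟩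
lemma fb15 : Qg 0 3 1 ∈ V20 := Submodule.subset_span ⟨15, rfl⟩
lemma fb16 : Qg 0 2 3 ∈ V20 := Submodule.subset_span ⟨16, rfl⟩
lemma fb17 : Qg 0 3 2 ∈ V20 := Submodule.subset_span ⟨17, rfl⟩
lemma fb18 : Qg 1 2 3 ∈ V20 := Submodule.subset_span ⟨18, rfl⟩
lemma fb19 : Qg 1 3 2 ∈ V20 := Submodule.subset_span ⟨19, rfl⟩

lemma Qg_mem_V20 (i j k : Fin 4) : Qg i j k ∈ V20 := by
  fin_cases i <;> fin_cases j <;> fin_cases k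
  · show Qg 0 0 0 ∈ V20
    rw [show Qg 0 0 0 = 0 from by simp only [Qg]; linear_combination (X 0^4 : MvPolynomial (Fin 4) (ZMod 2)) * two_eq_zero]
    exact zero_mem _
  · show Qg 0 0 1 ∈ V20
    rw [show Qg 0 0 1 = 0 from by simp only [Qg]; linear_combination (X 0^3*X 1 : MvPolynomial (Fin 4) (ZMod 2)) * two_eq_zero]
    exact zero_mem _
  · show Qg 0 0 2 ∈ V20
    rw [show Qg 0 0 2 = 0 from by simp only [Qg]; linear_combination (X 0^3*X 2 : MvPolynomial (Fin 4) (ZMod 2)) * two_eq_zero]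
    exact zero_mem _
  · show Qg 0 0 3 ∈ V20
    rw [show Qg 0 0 3 = 0 from by simp only [Qg]; linear_combination (X 0^3*X 3 : MvPolynomial (Fin 4) (ZMod 2)) * two_eq_zero]
    exact zero_mem _
  · exact fb0
  · exact fb1
  · exact fb12
  · exact fb14
  · exact fb2
  · exact fb13
  · exact fb3
  · exact fb16
  · exact fb4
  · exact fb15
  · exact fb17
  · exact fb5
  · show Qg 1 0 0 ∈ V20
    rw [show Qg 1 0 0 = Qg 0 1 0 from by simp only [Qg]; linear_combination (0 : MvPolynomial (Fin 4) (ZMod 2)) * two_eq_zero]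
    exact fb0
  · show Qg 1 0 1 ∈ V20
    rw [show Qg 1 0 1 = Qg 0 1 1 from by simp only [Qg]; linear_combination (0 : MvPolynomial (Fin 4) (ZMod 2)) * two_eq_zero]
    exact fb1
  · show Qg 1 0 2 ∈ V20
    rw [show Qg 1 0 2 = Qg 0 1 2 from by simp only [Qg]; linear_combination (0 : MvPolynomial (Fin 4) (ZMod 2)) * two_eq_zero]
    exact fb12
  · show Qg 1 0 3 ∈ V20
    rw [show Qg 1 0 3 = Qg 0 1 3 from by simp only [Qg]; linear_combination (0 : MvPolynomial (Fin 4) (ZMod 2)) * two_eq_zero]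
    exact fb14
  · show Qg 1 1 0 ∈ V20
    rw [show Qg 1 1 0 = 0 from by simp only [Qg]; linear_combination (X 0*X 1^3 : MvPolynomial (Fin 4) (ZMod 2)) * two_eq_zero]
    exact zero_mem _
  · show Qg 1 1 1 ∈ V20
    rw [show Qg 1 1 1 = 0 from by simp only [Qg]; linear_combination (X 1^4 : MvPolynomial (Fin 4) (ZMod 2)) * two_eq_zero]
    exact zero_mem _
  · show Qg 1 1 2 ∈ V20
    rw [show Qg 1 1 2 = 0 from by simp only [Qg]; linear_combination (X 1^3*X 2 : MvPolynomial (Fin 4) (ZMod 2)) * two_eq_zero]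
    exact zero_mem _
  · show Qg 1 1 3 ∈ V20
    rw [show Qg 1 1 3 = 0 from by simp only [Qg]; linear_combination (X 1^3*X 3 : MvPolynomial (Fin 4) (ZMod 2)) * two_eq_zero]
    exact zero_mem _
  · show Qg 1 2 0 ∈ V20
    rw [show Qg 1 2 0 = Qg 0 1 2 + Qg 0 2 1 from by simp only [Qg]; linear_combination ((-1)*X 0^2*X 1*X 2 : MvPolynomial (Fin 4) (ZMod 2)) * two_eq_zero]
    exact add_mem fb12 fb13
  · exact fb6
  · exact fb7
  · exact fb18
  · show Qg 1 3 0 ∈ V20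
    rw [show Qg 1 3 0 = Qg 0 1 3 + Qg 0 3 1 from by simp only [Qg]; linear_combination ((-1)*X 0^2*X 1*X 3 : MvPolynomial (Fin 4) (ZMod 2)) * two_eq_zero]
    exact add_mem fb14 fb15
  · exact fb8
  · exact fb19
  · exact fb9
  · show Qg 2 0 0 ∈ V20
    rw [show Qg 2 0 0 = Qg 0 2 0 from by simp only [Qg]; linear_combination (0 : MvPolynomial (Fin 4) (ZMod 2)) * two_eq_zero]
    exact fb2
  · show Qg 2 0 1 ∈ V20
    rw [show Qg 2 0 1 = Qg 0 2 1 from by simp only [Qg]; linear_combination (0 : MvPolynomial (Fin 4) (ZMod 2)) * two_eq_zero]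
    exact fb13
  · show Qg 2 0 2 ∈ V20
    rw [show Qg 2 0 2 = Qg 0 2 2 from by simp only [Qg]; linear_combination (0 : MvPolynomial (Fin 4) (ZMod 2)) * two_eq_zero]
    exact fb3
  · show Qg 2 0 3 ∈ V20
    rw [show Qg 2 0 3 = Qg 0 2 3 from by simp only [Qg]; linear_combination (0 : MvPolynomial (Fin 4) (ZMod 2)) * two_eq_zero]
    exact fb16
  · show Qg 2 1 0 ∈ V20
    rw [show Qg 2 1 0 = Qg 0 1 2 + Qg 0 2 1 from by simp only [Qg]; linear_combination ((-1)*X 0^2*X 1*X 2 : MvPolynomial (Fin 4) (ZMod 2)) * two_eq_zero]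
    exact add_mem fb12 fb13
  · show Qg 2 1 1 ∈ V20
    rw [show Qg 2 1 1 = Qg 1 2 1 from by simp only [Qg]; linear_combination (0 : MvPolynomial (Fin 4) (ZMod 2)) * two_eq_zero]
    exact fb6
  · show Qg 2 1 2 ∈ V20
    rw [show Qg 2 1 2 = Qg 1 2 2 from by simp only [Qg]; linear_combination (0 : MvPolynomial (Fin 4) (ZMod 2)) * two_eq_zero]
    exact fb7
  · show Qg 2 1 3 ∈ V20
    rw [show Qg 2 1 3 = Qg 1 2 3 from by simp only [Qg]; linear_combination (0 : MvPolynomial (Fin 4) (ZMod 2)) * two_eq_zero]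
    exact fb18
  · show Qg 2 2 0 ∈ V20
    rw [show Qg 2 2 0 = 0 from by simp only [Qg]; linear_combination (X 0*X 2^3 : MvPolynomial (Fin 4) (ZMod 2)) * two_eq_zero]
    exact zero_mem _
  · show Qg 2 2 1 ∈ V20
    rw [show Qg 2 2 1 = 0 from by simp only [Qg]; linear_combination (X 1*X 2^3 : MvPolynomial (Fin 4) (ZMod 2)) * two_eq_zero]
    exact zero_mem _
  · show Qg 2 2 2 ∈ V20
    rw [show Qg 2 2 2 = 0 from by simp only [Qg]; linear_combination (X 2^4 : MvPolynomial (Fin 4) (ZMod 2)) * two_eq_zero]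
    exact zero_mem _
  · show Qg 2 2 3 ∈ V20
    rw [show Qg 2 2 3 = 0 from by simp only [Qg]; linear_combination (X 2^3*X 3 : MvPolynomial (Fin 4) (ZMod 2)) * two_eq_zero]
    exact zero_mem _
  · show Qg 2 3 0 ∈ V20
    rw [show Qg 2 3 0 = Qg 0 2 3 + Qg 0 3 2 from by simp only [Qg]; linear_combination ((-1)*X 0^2*X 2*X 3 : MvPolynomial (Fin 4) (ZMod 2)) * two_eq_zero]
    exact add_mem fb16 fb17
  · show Qg 2 3 1 ∈ V20
    rw [show Qg 2 3 1 = Qg 1 2 3 + Qg 1 3 2 from by simp only [Qg]; linear_combination ((-1)*X 1^2*X 2*X 3 : MvPolynomial (Fin 4) (ZMod 2)) * two_eq_zero]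
    exact add_mem fb18 fb19
  · exact fb10
  · exact fb11
  · show Qg 3 0 0 ∈ V20
    rw [show Qg 3 0 0 = Qg 0 3 0 from by simp only [Qg]; linear_combination (0 : MvPolynomial (Fin 4) (ZMod 2)) * two_eq_zero]
    exact fb4
  · show Qg 3 0 1 ∈ V20
    rw [show Qg 3 0 1 = Qg 0 3 1 from by simp only [Qg]; linear_combination (0 : MvPolynomial (Fin 4) (ZMod 2)) * two_eq_zero]
    exact fb15
  · show Qg 3 0 2 ∈ V20
    rw [show Qg 3 0 2 = Qg 0 3 2 from by simp only [Qg]; linear_combination (0 : MvPolynomial (Fin 4) (ZMod 2)) * two_eq_zero]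
    exact fb17
  · show Qg 3 0 3 ∈ V20
    rw [show Qg 3 0 3 = Qg 0 3 3 from by simp only [Qg]; linear_combination (0 : MvPolynomial (Fin 4) (ZMod 2)) * two_eq_zero]
    exact fb5
  · show Qg 3 1 0 ∈ V20
    rw [show Qg 3 1 0 = Qg 0 1 3 + Qg 0 3 1 from by simp only [Qg]; linear_combination ((-1)*X 0^2*X 1*X 3 : MvPolynomial (Fin 4) (ZMod 2)) * two_eq_zero]
    exact add_mem fb14 fb15
  · show Qg 3 1 1 ∈ V20
    rw [show Qg 3 1 1 = Qg 1 3 1 from by simp only [Qg]; linear_combination (0 : MvPolynomial (Fin 4) (ZMod 2)) * two_eq_zero]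
    exact fb8
  · show Qg 3 1 2 ∈ V20
    rw [show Qg 3 1 2 = Qg 1 3 2 from by simp only [Qg]; linear_combination (0 : MvPolynomial (Fin 4) (ZMod 2)) * two_eq_zero]
    exact fb19
  · show Qg 3 1 3 ∈ V20
    rw [show Qg 3 1 3 = Qg 1 3 3 from by simp only [Qg]; linear_combination (0 : MvPolynomial (Fin 4) (ZMod 2)) * two_eq_zero]
    exact fb9
  · show Qg 3 2 0 ∈ V20
    rw [show Qg 3 2 0 = Qg 0 2 3 + Qg 0 3 2 from by simp only [Qg]; linear_combination ((-1)*X 0^2*X 2*X 3 : MvPolynomial (Fin 4) (ZMod 2)) * two_eq_zero]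
    exact add_mem fb16 fb17
  · show Qg 3 2 1 ∈ V20
    rw [show Qg 3 2 1 = Qg 1 2 3 + Qg 1 3 2 from by simp only [Qg]; linear_combination ((-1)*X 1^2*X 2*X 3 : MvPolynomial (Fin 4) (ZMod 2)) * two_eq_zero]
    exact add_mem fb18 fb19
  · show Qg 3 2 2 ∈ V20
    rw [show Qg 3 2 2 = Qg 2 3 2 from by simp only [Qg]; linear_combination (0 : MvPolynomial (Fin 4) (ZMod 2)) * two_eq_zero]
    exact fb10
  · show Qg 3 2 3 ∈ V20
    rw [show Qg 3 2 3 = Qg 2 3 3 from by simp only [Qg]; linear_combination (0 : MvPolynomial (Fin 4) (ZMod 2)) * two_eq_zero]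
    exact fb11
  · show Qg 3 3 0 ∈ V20
    rw [show Qg 3 3 0 = 0 from by simp only [Qg]; linear_combination (X 0*X 3^3 : MvPolynomial (Fin 4) (ZMod 2)) * two_eq_zero]
    exact zero_mem _
  · show Qg 3 3 1 ∈ V20
    rw [show Qg 3 3 1 = 0 from by simp only [Qg]; linear_combination (X 1*X 3^3 : MvPolynomial (Fin 4) (ZMod 2)) * two_eq_zero]
    exact zero_mem _
  · show Qg 3 3 2 ∈ V20
    rw [show Qg 3 3 2 = 0 from by simp only [Qg]; linear_combination (X 2*X 3^3 : MvPolynomial (Fin 4) (ZMod 2)) * two_eq_zero]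
    exact zero_mem _
  · show Qg 3 3 3 ∈ V20
    rw [show Qg 3 3 3 = 0 from by simp only [Qg]; linear_combination (X 3^4 : MvPolynomial (Fin 4) (ZMod 2)) * two_eq_zero]
    exact zero_mem _

lemma Qp_add3 (l m n n' : PP) : Qp l m (n + n') = Qp l m n + Qp l m n' := by
  simp only [Qp]; ring

lemma Qp_smul3 (a : ZMod 2) (l m n : PP) : Qp l m (C a * n) = C a * Qp l m n := by
  simp only [Qp]; ring

lemma CC (a : ZMod 2) : (C a : PP) * C a = C a := by
  rw [← map_mul]
  congr 1
  revert a; decide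

lemma Qp_add2 (l m m' n : PP) : Qp l (m + m') n = Qp l m n + Qp l m' n := by
  simp only [Qp]; linear_combination (l * m * m' * n : PP) * two_eq_zero

lemma Qp_smul2 (a : ZMod 2) (l m n : PP) : Qp l (C a * m) n = C a * Qp l m n := by
  simp only [Qp]; linear_combination (l * m ^ 2 * n : PP) * CC a

lemma Qp_add1 (l l' m n : PP) : Qp (l + l') m n = Qp l m n + Qp l' m n := by
  simp only [Qp]; linear_combination (l * l' * m * n : PP) * two_eq_zero

lemma Qp_smul1 (a : ZMod 2) (l m n : PP) : Qp (C a * l) m n = C a * Qp l m n := by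
  simp only [Qp]; linear_combination (l ^ 2 * m * n : PP) * CC a

lemma mem3 (i j : Fin 4) {n : PP} (hn : n.IsHomogeneous 1) : Qp (X i) (X j) n ∈ V20 := by
  rw [homog1_eq_sum hn, Fin.sum_univ_four, Qp_add3, Qp_add3, Qp_add3,
    Qp_smul3, Qp_smul3, Qp_smul3, Qp_smul3]
  refine add_mem (add_mem (add_mem ?_ ?_) ?_) ?_ <;>
  · rw [← smul_eq_C_mul]
    exact Submodule.smul_mem _ _ (Qg_mem_V20 _ _ _)

lemma mem2 (i : Fin 4) {m n : PP} (hm : m.IsHomogeneous 1) (hn : n.IsHomogeneous 1) :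
    Qp (X i) m n ∈ V20 := by
  rw [homog1_eq_sum hm, Fin.sum_univ_four, Qp_add2, Qp_add2, Qp_add2,
    Qp_smul2, Qp_smul2, Qp_smul2, Qp_smul2]
  refine add_mem (add_mem (add_mem ?_ ?_) ?_) ?_ <;>
  · rw [← smul_eq_C_mul]
    exact Submodule.smul_mem _ _ (mem3 _ _ hn)

lemma mem1 {l m n : PP} (hl : l.IsHomogeneous 1) (hm : m.IsHomogeneous 1)
    (hn : n.IsHomogeneous 1) : Qp l m n ∈ V20 := by
  rw [homog1_eq_sum hl, Fin.sum_univ_four, Qp_add1, Qp_add1, Qp_add1,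
    Qp_smul1, Qp_smul1, Qp_smul1, Qp_smul1]
  refine add_mem (add_mem (add_mem ?_ ?_) ?_) ?_ <;>
  · rw [← smul_eq_C_mul]
    exact Submodule.smul_mem _ _ (mem2 _ hm hn)

lemma gen_mem_V20 {l m : PP} (hl : l.IsHomogeneous 1) (hm : m.IsHomogeneous 1) :
    l ^ 3 * m + l * m ^ 3 ∈ V20 := by
  rw [show l ^ 3 * m + l * m ^ 3 = Qp l m (l + m) from by
    simp only [Qp]; linear_combination (-(l ^ 2 * m ^ 2) : PP) * two_eq_zero]
  exact mem1 hl hm (hl.add hm)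

lemma Qg_mem_QS (i j k : Fin 4) : Qg i j k ∈ QuarticSpan := by
  have e : Qg i j k = ((X k) ^ 3 * (X i) + (X k) * (X i) ^ 3)
      + ((X k) ^ 3 * (X j) + (X k) * (X j) ^ 3)
      + ((X k) ^ 3 * (X i + X j) + (X k) * (X i + X j) ^ 3) := by
    simp only [Qg]
    linear_combination (-(X i^3*X k + X j^3*X k + X i^2*X j*X k + X i*X j^2*X k
      + X i*X k^3 + X j*X k^3) : PP) * two_eq_zero
  rw [e]
  refine add_mem (add_mem ?_ ?_) ?_
  · exact Submodule.subset_span ⟨X k, X i, isHomogeneous_X _ _, isHomogeneous_X _ _, rfl⟩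
  · exact Submodule.subset_span ⟨X k, X j, isHomogeneous_X _ _, isHomogeneous_X _ _, rfl⟩
  · exact Submodule.subset_span ⟨X k, X i + X j, isHomogeneous_X _ _,
      (isHomogeneous_X _ _).add (isHomogeneous_X _ _), rfl⟩

lemma QS_eq_V20 : QuarticSpan = V20 := by
  apply le_antisymm
  · rw [QuarticSpan, Submodule.span_le]
    rintro f ⟨l, m, hl, hm, rfl⟩
    exact gen_mem_V20 hl hm
  · rw [V20, Submodule.span_le]
    rintro f ⟨p, rfl⟩
    fin_cases p <;> exact Qg_mem_QS _ _ _

noncomputable def Φ : PP →ₐ[ZMod 2] Polynomial (ZMod 2) :=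
  aeval (fun i => Polynomial.X ^ (5 ^ (i : ℕ)))


lemma phi0 : Φ (Qg 0 1 0) = Polynomial.X ^ 8 + Polynomial.X ^ 12 := by
  simp only [Φ, Qg, map_add, map_mul, map_pow, aeval_X,
    (show ((0 : Fin 4) : ℕ) = 0 from rfl), (show ((1 : Fin 4) : ℕ) = 1 from rfl),
    (show ((2 : Fin 4) : ℕ) = 2 from rfl), (show ((3 : Fin 4) : ℕ) = 3 from rfl)]
  norm_num
  ring
lemma phi1 : Φ (Qg 0 1 1) = Polynomial.X ^ 12 + Polynomial.X ^ 16 := by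
  simp only [Φ, Qg, map_add, map_mul, map_pow, aeval_X,
    (show ((0 : Fin 4) : ℕ) = 0 from rfl), (show ((1 : Fin 4) : ℕ) = 1 from rfl),
    (show ((2 : Fin 4) : ℕ) = 2 from rfl), (show ((3 : Fin 4) : ℕ) = 3 from rfl)]
  norm_num
  ring
lemma phi2 : Φ (Qg 0 2 0) = Polynomial.X ^ 28 + Polynomial.X ^ 52 := by
  simp only [Φ, Qg, map_add, map_mul, map_pow, aeval_X,
    (show ((0 : Fin 4) : ℕ) = 0 from rfl), (show ((1 : Fin 4) : ℕ) = 1 from rfl),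
    (show ((2 : Fin 4) : ℕ) = 2 from rfl), (show ((3 : Fin 4) : ℕ) = 3 from rfl)]
  norm_num
  ring
lemma phi3 : Φ (Qg 0 2 2) = Polynomial.X ^ 52 + Polynomial.X ^ 76 := by
  simp only [Φ, Qg, map_add, map_mul, map_pow, aeval_X,
    (show ((0 : Fin 4) : ℕ) = 0 from rfl), (show ((1 : Fin 4) : ℕ) = 1 from rfl),
    (show ((2 : Fin 4) : ℕ) = 2 from rfl), (show ((3 : Fin 4) : ℕ) = 3 from rfl)]
  norm_num
  ring
lemma phi4 : Φ (Qg 0 3 0) = Polynomial.X ^ 128 + Polynomial.X ^ 252 := by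
  simp only [Φ, Qg, map_add, map_mul, map_pow, aeval_X,
    (show ((0 : Fin 4) : ℕ) = 0 from rfl), (show ((1 : Fin 4) : ℕ) = 1 from rfl),
    (show ((2 : Fin 4) : ℕ) = 2 from rfl), (show ((3 : Fin 4) : ℕ) = 3 from rfl)]
  norm_num
  ring
lemma phi5 : Φ (Qg 0 3 3) = Polynomial.X ^ 252 + Polynomial.X ^ 376 := by
  simp only [Φ, Qg, map_add, map_mul, map_pow, aeval_X,
    (show ((0 : Fin 4) : ℕ) = 0 from rfl), (show ((1 : Fin 4) : ℕ) = 1 from rfl),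
    (show ((2 : Fin 4) : ℕ) = 2 from rfl), (show ((3 : Fin 4) : ℕ) = 3 from rfl)]
  norm_num
  ring
lemma phi6 : Φ (Qg 1 2 1) = Polynomial.X ^ 40 + Polynomial.X ^ 60 := by
  simp only [Φ, Qg, map_add, map_mul, map_pow, aeval_X,
    (show ((0 : Fin 4) : ℕ) = 0 from rfl), (show ((1 : Fin 4) : ℕ) = 1 from rfl),
    (show ((2 : Fin 4) : ℕ) = 2 from rfl), (show ((3 : Fin 4) : ℕ) = 3 from rfl)]
  norm_num
  ring
lemma phi7 : Φ (Qg 1 2 2) = Polynomial.X ^ 60 + Polynomial.X ^ 80 := by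
  simp only [Φ, Qg, map_add, map_mul, map_pow, aeval_X,
    (show ((0 : Fin 4) : ℕ) = 0 from rfl), (show ((1 : Fin 4) : ℕ) = 1 from rfl),
    (show ((2 : Fin 4) : ℕ) = 2 from rfl), (show ((3 : Fin 4) : ℕ) = 3 from rfl)]
  norm_num
  ring
lemma phi8 : Φ (Qg 1 3 1) = Polynomial.X ^ 140 + Polynomial.X ^ 260 := by
  simp only [Φ, Qg, map_add, map_mul, map_pow, aeval_X,
    (show ((0 : Fin 4) : ℕ) = 0 from rfl), (show ((1 : Fin 4) : ℕ) = 1 from rfl),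
    (show ((2 : Fin 4) : ℕ) = 2 from rfl), (show ((3 : Fin 4) : ℕ) = 3 from rfl)]
  norm_num
  ring
lemma phi9 : Φ (Qg 1 3 3) = Polynomial.X ^ 260 + Polynomial.X ^ 380 := by
  simp only [Φ, Qg, map_add, map_mul, map_pow, aeval_X,
    (show ((0 : Fin 4) : ℕ) = 0 from rfl), (show ((1 : Fin 4) : ℕ) = 1 from rfl),
    (show ((2 : Fin 4) : ℕ) = 2 from rfl), (show ((3 : Fin 4) : ℕ) = 3 from rfl)]
  norm_num
  ring
lemma phi10 : Φ (Qg 2 3 2) = Polynomial.X ^ 200 + Polynomial.X ^ 300 := by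
  simp only [Φ, Qg, map_add, map_mul, map_pow, aeval_X,
    (show ((0 : Fin 4) : ℕ) = 0 from rfl), (show ((1 : Fin 4) : ℕ) = 1 from rfl),
    (show ((2 : Fin 4) : ℕ) = 2 from rfl), (show ((3 : Fin 4) : ℕ) = 3 from rfl)]
  norm_num
  ring
lemma phi11 : Φ (Qg 2 3 3) = Polynomial.X ^ 300 + Polynomial.X ^ 400 := by
  simp only [Φ, Qg, map_add, map_mul, map_pow, aeval_X,
    (show ((0 : Fin 4) : ℕ) = 0 from rfl), (show ((1 : Fin 4) : ℕ) = 1 from rfl),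
    (show ((2 : Fin 4) : ℕ) = 2 from rfl), (show ((3 : Fin 4) : ℕ) = 3 from rfl)]
  norm_num
  ring
lemma phi12 : Φ (Qg 0 1 2) = Polynomial.X ^ 32 + Polynomial.X ^ 36 := by
  simp only [Φ, Qg, map_add, map_mul, map_pow, aeval_X,
    (show ((0 : Fin 4) : ℕ) = 0 from rfl), (show ((1 : Fin 4) : ℕ) = 1 from rfl),
    (show ((2 : Fin 4) : ℕ) = 2 from rfl), (show ((3 : Fin 4) : ℕ) = 3 from rfl)]
  norm_num
  ring
lemma phi13 : Φ (Qg 0 2 1) = Polynomial.X ^ 32 + Polynomial.X ^ 56 := by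
  simp only [Φ, Qg, map_add, map_mul, map_pow, aeval_X,
    (show ((0 : Fin 4) : ℕ) = 0 from rfl), (show ((1 : Fin 4) : ℕ) = 1 from rfl),
    (show ((2 : Fin 4) : ℕ) = 2 from rfl), (show ((3 : Fin 4) : ℕ) = 3 from rfl)]
  norm_num
  ring
lemma phi14 : Φ (Qg 0 1 3) = Polynomial.X ^ 132 + Polynomial.X ^ 136 := by
  simp only [Φ, Qg, map_add, map_mul, map_pow, aeval_X,
    (show ((0 : Fin 4) : ℕ) = 0 from rfl), (show ((1 : Fin 4) : ℕ) = 1 from rfl),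
    (show ((2 : Fin 4) : ℕ) = 2 from rfl), (show ((3 : Fin 4) : ℕ) = 3 from rfl)]
  norm_num
  ring
lemma phi15 : Φ (Qg 0 3 1) = Polynomial.X ^ 132 + Polynomial.X ^ 256 := by
  simp only [Φ, Qg, map_add, map_mul, map_pow, aeval_X,
    (show ((0 : Fin 4) : ℕ) = 0 from rfl), (show ((1 : Fin 4) : ℕ) = 1 from rfl),
    (show ((2 : Fin 4) : ℕ) = 2 from rfl), (show ((3 : Fin 4) : ℕ) = 3 from rfl)]
  norm_num
  ring
lemma phi16 : Φ (Qg 0 2 3) = Polynomial.X ^ 152 + Polynomial.X ^ 176 := by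
  simp only [Φ, Qg, map_add, map_mul, map_pow, aeval_X,
    (show ((0 : Fin 4) : ℕ) = 0 from rfl), (show ((1 : Fin 4) : ℕ) = 1 from rfl),
    (show ((2 : Fin 4) : ℕ) = 2 from rfl), (show ((3 : Fin 4) : ℕ) = 3 from rfl)]
  norm_num
  ring
lemma phi17 : Φ (Qg 0 3 2) = Polynomial.X ^ 152 + Polynomial.X ^ 276 := by
  simp only [Φ, Qg, map_add, map_mul, map_pow, aeval_X,
    (show ((0 : Fin 4) : ℕ) = 0 from rfl), (show ((1 : Fin 4) : ℕ) = 1 from rfl),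
    (show ((2 : Fin 4) : ℕ) = 2 from rfl), (show ((3 : Fin 4) : ℕ) = 3 from rfl)]
  norm_num
  ring
lemma phi18 : Φ (Qg 1 2 3) = Polynomial.X ^ 160 + Polynomial.X ^ 180 := by
  simp only [Φ, Qg, map_add, map_mul, map_pow, aeval_X,
    (show ((0 : Fin 4) : ℕ) = 0 from rfl), (show ((1 : Fin 4) : ℕ) = 1 from rfl),
    (show ((2 : Fin 4) : ℕ) = 2 from rfl), (show ((3 : Fin 4) : ℕ) = 3 from rfl)]
  norm_num
  ring
lemma phi19 : Φ (Qg 1 3 2) = Polynomial.X ^ 160 + Polynomial.X ^ 280 := by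
  simp only [Φ, Qg, map_add, map_mul, map_pow, aeval_X,
    (show ((0 : Fin 4) : ℕ) = 0 from rfl), (show ((1 : Fin 4) : ℕ) = 1 from rfl),
    (show ((2 : Fin 4) : ℕ) = 2 from rfl), (show ((3 : Fin 4) : ℕ) = 3 from rfl)]
  norm_num
  ring

set_option maxHeartbeats 1000000 in
lemma Fb_indep : LinearIndependent (ZMod 2) Fb := by
  rw [Fintype.linearIndependent_iff]
  intro g hg
  rw [Fin.sum_univ_succ, Fin.sum_univ_succ, Fin.sum_univ_succ, Fin.sum_univ_succ,
    Fin.sum_univ_succ, Fin.sum_univ_succ, Fin.sum_univ_succ, Fin.sum_univ_succ,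
    Fin.sum_univ_succ, Fin.sum_univ_succ, Fin.sum_univ_succ, Fin.sum_univ_succ,
    Fin.sum_univ_succ, Fin.sum_univ_succ, Fin.sum_univ_succ, Fin.sum_univ_succ,
    Fin.sum_univ_succ, Fin.sum_univ_succ, Fin.sum_univ_succ, Fin.sum_univ_succ,
    Fin.sum_univ_zero] at hg
  have H := congrArg Φ hg
  simp only [Fb, Matrix.cons_val_zero, Matrix.cons_val_one, Matrix.head_cons,
    Matrix.cons_val_succ, map_add, map_smul, map_zero, add_zero,
    phi0, phi1, phi2, phi3, phi4, phi5, phi6, phi7, phi8, phi9, phi10, phi11, phi12, phi13, phi14, phi15, phi16, phi17, phi18, phi19] at H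
  intro i
  fin_cases i
  · have h := congrArg (fun q => Polynomial.coeff q 8) H
    simp only [Polynomial.coeff_add, Polynomial.coeff_smul, Polynomial.coeff_X_pow,
      Polynomial.coeff_zero] at h
    norm_num at h
    exact h
  · have h := congrArg (fun q => Polynomial.coeff q 16) H
    simp only [Polynomial.coeff_add, Polynomial.coeff_smul, Polynomial.coeff_X_pow,
      Polynomial.coeff_zero] at h
    norm_num at h
    exact h
  · have h := congrArg (fun q => Polynomial.coeff q 28) H
    simp only [Polynomial.coeff_add, Polynomial.coeff_smul, Polynomial.coeff_X_pow,
      Polynomial.coeff_zero] at h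
    norm_num at h
    exact h
  · have h := congrArg (fun q => Polynomial.coeff q 76) H
    simp only [Polynomial.coeff_add, Polynomial.coeff_smul, Polynomial.coeff_X_pow,
      Polynomial.coeff_zero] at h
    norm_num at h
    exact h
  · have h := congrArg (fun q => Polynomial.coeff q 128) H
    simp only [Polynomial.coeff_add, Polynomial.coeff_smul, Polynomial.coeff_X_pow,
      Polynomial.coeff_zero] at h
    norm_num at h
    exact h
  · have h := congrArg (fun q => Polynomial.coeff q 376) H
    simp only [Polynomial.coeff_add, Polynomial.coeff_smul, Polynomial.coeff_X_pow,
      Polynomial.coeff_zero] at h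
    norm_num at h
    exact h
  · have h := congrArg (fun q => Polynomial.coeff q 40) H
    simp only [Polynomial.coeff_add, Polynomial.coeff_smul, Polynomial.coeff_X_pow,
      Polynomial.coeff_zero] at h
    norm_num at h
    exact h
  · have h := congrArg (fun q => Polynomial.coeff q 80) H
    simp only [Polynomial.coeff_add, Polynomial.coeff_smul, Polynomial.coeff_X_pow,
      Polynomial.coeff_zero] at h
    norm_num at h
    exact h
  · have h := congrArg (fun q => Polynomial.coeff q 140) H
    simp only [Polynomial.coeff_add, Polynomial.coeff_smul, Polynomial.coeff_X_pow,
      Polynomial.coeff_zero] at h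
    norm_num at h
    exact h
  · have h := congrArg (fun q => Polynomial.coeff q 380) H
    simp only [Polynomial.coeff_add, Polynomial.coeff_smul, Polynomial.coeff_X_pow,
      Polynomial.coeff_zero] at h
    norm_num at h
    exact h
  · have h := congrArg (fun q => Polynomial.coeff q 200) H
    simp only [Polynomial.coeff_add, Polynomial.coeff_smul, Polynomial.coeff_X_pow,
      Polynomial.coeff_zero] at h
    norm_num at h
    exact h
  · have h := congrArg (fun q => Polynomial.coeff q 400) H
    simp only [Polynomial.coeff_add, Polynomial.coeff_smul, Polynomial.coeff_X_pow,
      Polynomial.coeff_zero] at h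
    norm_num at h
    exact h
  · have h := congrArg (fun q => Polynomial.coeff q 36) H
    simp only [Polynomial.coeff_add, Polynomial.coeff_smul, Polynomial.coeff_X_pow,
      Polynomial.coeff_zero] at h
    norm_num at h
    exact h
  · have h := congrArg (fun q => Polynomial.coeff q 56) H
    simp only [Polynomial.coeff_add, Polynomial.coeff_smul, Polynomial.coeff_X_pow,
      Polynomial.coeff_zero] at h
    norm_num at h
    exact h
  · have h := congrArg (fun q => Polynomial.coeff q 136) H
    simp only [Polynomial.coeff_add, Polynomial.coeff_smul, Polynomial.coeff_X_pow,
      Polynomial.coeff_zero] at h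
    norm_num at h
    exact h
  · have h := congrArg (fun q => Polynomial.coeff q 256) H
    simp only [Polynomial.coeff_add, Polynomial.coeff_smul, Polynomial.coeff_X_pow,
      Polynomial.coeff_zero] at h
    norm_num at h
    exact h
  · have h := congrArg (fun q => Polynomial.coeff q 176) H
    simp only [Polynomial.coeff_add, Polynomial.coeff_smul, Polynomial.coeff_X_pow,
      Polynomial.coeff_zero] at h
    norm_num at h
    exact h
  · have h := congrArg (fun q => Polynomial.coeff q 276) H
    simp only [Polynomial.coeff_add, Polynomial.coeff_smul, Polynomial.coeff_X_pow,
      Polynomial.coeff_zero] at h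
    norm_num at h
    exact h
  · have h := congrArg (fun q => Polynomial.coeff q 180) H
    simp only [Polynomial.coeff_add, Polynomial.coeff_smul, Polynomial.coeff_X_pow,
      Polynomial.coeff_zero] at h
    norm_num at h
    exact h
  · have h := congrArg (fun q => Polynomial.coeff q 280) H
    simp only [Polynomial.coeff_add, Polynomial.coeff_smul, Polynomial.coeff_X_pow,
      Polynomial.coeff_zero] at h
    norm_num at h
    exact h

lemma linSub_homog1 {A : Matrix (Fin 4) (Fin 4) (ZMod 2)} {l : PP}
    (hl : l.IsHomogeneous 1) : (linSub A l).IsHomogeneous 1 := by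
  rw [linSub, homog1_eq_sum hl, map_sum]
  apply IsHomogeneous.sum
  intro i _
  rw [map_mul, aeval_C, aeval_X]
  exact (isHomogeneous_C _ _).mul
    (IsHomogeneous.sum _ _ _ fun j _ => isHomogeneous_C_mul_X _ _)

/-- The span `W` of the quartics `ℓ₁³ ℓ₂ + ℓ₁ ℓ₂³` (for linear forms
`ℓ₁, ℓ₂`) in `F₂[x₀, x₁, x₂, x₃]` is invariant under the action of `GL₄(F₂)` by
linear substitution of the variables, and `dim_{F₂} W = 20`. -/
theorem quarticSpan_invariant_and_dim :
    (∀ g : GL (Fin 4) (ZMod 2), ∀ f ∈ QuarticSpan,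
      linSub (g : Matrix (Fin 4) (Fin 4) (ZMod 2)) f ∈ QuarticSpan) ∧
    Module.finrank (ZMod 2) QuarticSpan = 20 := by
  constructor
  · intro g f hf
    induction hf using Submodule.span_induction with
    | mem x hx =>
      obtain ⟨l, m, hl, hm, rfl⟩ := hx
      refine Submodule.subset_span ⟨linSub (g : Matrix (Fin 4) (Fin 4) (ZMod 2)) l,
        linSub (g : Matrix (Fin 4) (Fin 4) (ZMod 2)) m, linSub_homog1 hl, linSub_homog1 hm, ?_⟩
      simp only [linSub, map_add, map_mul, map_pow]
    | zero => rw [linSub, map_zero]; exact zero_mem _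
    | add x y hx hy ihx ihy =>
      rw [linSub, map_add]; exact add_mem ihx ihy
    | smul a x hx ih =>
      rw [linSub, map_smul]; exact Submodule.smul_mem _ _ ih
  · rw [QS_eq_V20, V20]
    rw [finrank_span_eq_card Fb_indep]
    simp
end

section
/- The cubic form f_1 = x_0 x_3^2 + x_1 x_4^2 + x_2 x_5^2 + x_0^2 x_3 + x_1^2 x_4 + x_2^2 x_5 is an F_2-form of the Fermat cubic: there exists g ∈ GL_6(F_4) such that f_2 ∘ g = f_1 as homogeneous cubic polynomials in F_4[x_0, …, x_5], where f_2 = x_0^3 + x_1^3 + x_2^3 + x_3^3 + x_4^3 + x_5^3, while f_1 and f_2 lie in distinct GL_6(F_2)-orbits. -/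
open MvPolynomial

/-- The cubic form `f₁ = x₀x₃² + x₁x₄² + x₂x₅² + x₀²x₃ + x₁²x₄ + x₂²x₅`. -/
noncomputable def f₁ : MvPolynomial (Fin 6) (ZMod 2) :=
  X 0 * X 3 ^ 2 + X 1 * X 4 ^ 2 + X 2 * X 5 ^ 2 +
    X 0 ^ 2 * X 3 + X 1 ^ 2 * X 4 + X 2 ^ 2 * X 5

/-- The Fermat cubic form `f₂ = x₀³ + x₁³ + x₂³ + x₃³ + x₄³ + x₅³`. -/
noncomputable def f₂ : MvPolynomial (Fin 6) (ZMod 2) :=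
  X 0 ^ 3 + X 1 ^ 3 + X 2 ^ 3 + X 3 ^ 3 + X 4 ^ 3 + X 5 ^ 3

/-! ### Auxiliary lemmas -/

lemma v0 {α : Type*} (a b c d e f : α) : ![a,b,c,d,e,f] 0 = a := rfl
lemma v1 {α : Type*} (a b c d e f : α) : ![a,b,c,d,e,f] 1 = b := rfl
lemma v2 {α : Type*} (a b c d e f : α) : ![a,b,c,d,e,f] 2 = c := rfl
lemma v3 {α : Type*} (a b c d e f : α) : ![a,b,c,d,e,f] 3 = d := rfl
lemma v4 {α : Type*} (a b c d e f : α) : ![a,b,c,d,e,f] 4 = e := rfl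
lemma v5 {α : Type*} (a b c d e f : α) : ![a,b,c,d,e,f] 5 = f := rfl
lemma w0 {α : Type*} {h} (a b c d e f : α) : ![a,b,c,d,e,f] ⟨0,h⟩ = a := rfl
lemma w1 {α : Type*} {h} (a b c d e f : α) : ![a,b,c,d,e,f] ⟨1,h⟩ = b := rfl
lemma w2 {α : Type*} {h} (a b c d e f : α) : ![a,b,c,d,e,f] ⟨2,h⟩ = c := rfl
lemma w3 {α : Type*} {h} (a b c d e f : α) : ![a,b,c,d,e,f] ⟨3,h⟩ = d := rfl
lemma w4 {α : Type*} {h} (a b c d e f : α) : ![a,b,c,d,e,f] ⟨4,h⟩ = e := rfl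
lemma w5 {α : Type*} {h} (a b c d e f : α) : ![a,b,c,d,e,f] ⟨5,h⟩ = f := rfl

/-- Evaluation of a linearly substituted polynomial. -/
lemma eval_linSub {R : Type*} [CommRing R] {m : ℕ} (A : Matrix (Fin m) (Fin m) R)
    (f : MvPolynomial (Fin m) R) (v : Fin m → R) :
    eval v (linSub A f) = eval (A.mulVec v) f := by
  have : linSub A f = bind₁ (fun i => ∑ j, MvPolynomial.C (A i j) * MvPolynomial.X j) f := rfl
  rw [this, show (eval v : MvPolynomial (Fin m) R →+* R) = eval₂Hom (RingHom.id R) v from rfl,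
    eval₂Hom_bind₁]
  have hfun : (fun i => (eval₂Hom (RingHom.id R) v) (∑ j : Fin m, C (A i j) * X j)) = A.mulVec v := by
    funext i; simp [Matrix.mulVec, dotProduct]
  rw [hfun]; rfl

/-- `F₄` contains a primitive cube root of unity. -/
lemma omega_facts : ∃ ω : GaloisField 2 2, ω ≠ 0 ∧ ω ≠ 1 ∧ ω ^ 2 + ω + 1 = 0 := by
  haveI : Fintype (GaloisField 2 2) := Fintype.ofFinite _
  haveI := Classical.decEq (GaloisField 2 2)
  have hcard : Fintype.card (GaloisField 2 2) = 4 := by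
    have := GaloisField.card 2 2 (by norm_num)
    rw [Nat.card_eq_fintype_card] at this
    omega
  obtain ⟨ω, hω⟩ : ∃ ω : GaloisField 2 2, ω ∉ ({0, 1} : Finset (GaloisField 2 2)) := by
    by_contra h
    push_neg at h
    have : (Finset.univ : Finset (GaloisField 2 2)).card ≤ ({0,1} : Finset (GaloisField 2 2)).card :=
      Finset.card_le_card (fun x _ => h x)
    have h2 : ({0,1} : Finset (GaloisField 2 2)).card ≤ 2 :=
      Finset.card_insert_le _ _ |>.trans (by simp)
    rw [Finset.card_univ, hcard] at this
    omega
  simp only [Finset.mem_insert, Finset.mem_singleton, not_or] at hω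
  obtain ⟨h0, h1⟩ := hω
  refine ⟨ω, h0, h1, ?_⟩
  have h3 : ω ^ 3 = 1 := by
    have := FiniteField.pow_card_sub_one_eq_one ω h0
    rwa [hcard] at this
  have h : (ω - 1) * (ω ^ 2 + ω + 1) = 0 := by linear_combination h3
  rcases mul_eq_zero.mp h with h | h
  · exact absurd (sub_eq_zero.mp h) h1
  · exact h

lemma matAB {F : Type*} [Field F] (ω : F) (h2 : (2 : F) = 0) :
    (Matrix.of ![![1, 0, 0, ω, 0, 0], ![0, 1, 0, 0, ω, 0], ![0, 0, 1, 0, 0, ω],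
      ![1, 0, 0, ω + 1, 0, 0], ![0, 1, 0, 0, ω + 1, 0], ![0, 0, 1, 0, 0, ω + 1]]) *
    (Matrix.of ![![ω + 1, 0, 0, ω, 0, 0], ![0, ω + 1, 0, 0, ω, 0], ![0, 0, ω + 1, 0, 0, ω],
      ![1, 0, 0, 1, 0, 0], ![0, 1, 0, 0, 1, 0], ![0, 0, 1, 0, 0, 1]]) = 1 := by
  ext i j
  fin_cases i <;> fin_cases j <;>
    simp only [Matrix.mul_apply, Fin.sum_univ_six, Matrix.of_apply, v0, v1, v2, v3, v4, v5,
      w0, w1, w2, w3, w4, w5, Matrix.one_apply, Fin.mk.injEq, mul_zero, zero_mul, mul_one,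
      one_mul, add_zero, zero_add] <;>
    norm_num <;>
    linear_combination (norm := ring_nf) ω * h2 <;> exact h2

lemma matBA {F : Type*} [Field F] (ω : F) (h2 : (2 : F) = 0) :
    (Matrix.of ![![ω + 1, 0, 0, ω, 0, 0], ![0, ω + 1, 0, 0, ω, 0], ![0, 0, ω + 1, 0, 0, ω],
      ![1, 0, 0, 1, 0, 0], ![0, 1, 0, 0, 1, 0], ![0, 0, 1, 0, 0, 1]]) *
    (Matrix.of ![![1, 0, 0, ω, 0, 0], ![0, 1, 0, 0, ω, 0], ![0, 0, 1, 0, 0, ω],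
      ![1, 0, 0, ω + 1, 0, 0], ![0, 1, 0, 0, ω + 1, 0], ![0, 0, 1, 0, 0, ω + 1]]) = 1 := by
  ext i j
  fin_cases i <;> fin_cases j <;>
    simp only [Matrix.mul_apply, Fin.sum_univ_six, Matrix.of_apply, v0, v1, v2, v3, v4, v5,
      w0, w1, w2, w3, w4, w5, Matrix.one_apply, Fin.mk.injEq, mul_zero, zero_mul, mul_one,
      one_mul, add_zero, zero_add] <;>
    norm_num <;>
    first
      | linear_combination ω * h2
      | linear_combination (ω ^ 2 + ω) * h2
      | linear_combination h2

lemma polyId (ω : GaloisField 2 2) (h2 : (2 : GaloisField 2 2) = 0)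
    (hq : ω ^ 2 + ω + 1 = 0) :
    linSub (Matrix.of ![![1, 0, 0, ω, 0, 0], ![0, 1, 0, 0, ω, 0], ![0, 0, 1, 0, 0, ω],
        ![1, 0, 0, ω + 1, 0, 0], ![0, 1, 0, 0, ω + 1, 0], ![0, 0, 1, 0, 0, ω + 1]])
      (MvPolynomial.map (algebraMap (ZMod 2) (GaloisField 2 2)) f₂)
      = MvPolynomial.map (algebraMap (ZMod 2) (GaloisField 2 2)) f₁ := by
  have hq' : (C ω : MvPolynomial (Fin 6) (GaloisField 2 2)) ^ 2 + C ω + 1 = 0 := by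
    rw [← C_pow, ← C_1, ← C_add, ← C_add, hq, C_0]
  have h2' : (2 : MvPolynomial (Fin 6) (GaloisField 2 2)) = 0 := by
    have := congrArg (C : GaloisField 2 2 →+* MvPolynomial (Fin 6) (GaloisField 2 2)) h2
    rwa [map_ofNat, map_zero] at this
  simp only [f₁, f₂, map_add, map_mul, map_pow, MvPolynomial.map_X, linSub, aeval_X,
    Fin.sum_univ_six, Matrix.of_apply, v0, v1, v2, v3, v4, v5, C_0, C_1, C_add, zero_mul,
    one_mul, add_zero, zero_add, map_one]
  linear_combination (X 0 ^ 3 + (3 * C ω + 1) * X 0 ^ 2 * X 3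
      + (3 * C ω ^ 2 + 3 * C ω + 1) * X 0 * X 3 ^ 2
      + X 1 ^ 3 + (3 * C ω + 1) * X 1 ^ 2 * X 4
      + (3 * C ω ^ 2 + 3 * C ω + 1) * X 1 * X 4 ^ 2
      + X 2 ^ 3 + (3 * C ω + 1) * X 2 ^ 2 * X 5
      + (3 * C ω ^ 2 + 3 * C ω + 1) * X 2 * X 5 ^ 2) * h2'
    + (2 * C ω + 1) * ((X 3 : MvPolynomial (Fin 6) (GaloisField 2 2)) ^ 3 + X 4 ^ 3 + X 5 ^ 3) * hq'

/-- The cubic form `f₁` is an `F₂`-form of the Fermat cubic `f₂`: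
over `F₄` (realized as `GaloisField 2 2`) there is `g ∈ GL₆(F₄)` with `f₂ ∘ g = f₁`,
while over `F₂` the forms `f₁` and `f₂` lie in distinct `GL₆(F₂)`-orbits. -/
theorem f₁_is_a_form_of_the_fermat_cubic :
    (∃ g : GL (Fin 6) (GaloisField 2 2),
      linSub ((g : GL (Fin 6) (GaloisField 2 2)) : Matrix (Fin 6) (Fin 6) (GaloisField 2 2))
          (MvPolynomial.map (algebraMap (ZMod 2) (GaloisField 2 2)) f₂)
        = MvPolynomial.map (algebraMap (ZMod 2) (GaloisField 2 2)) f₁) ∧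
    ¬ ∃ g : GL (Fin 6) (ZMod 2),
        linSub ((g : GL (Fin 6) (ZMod 2)) : Matrix (Fin 6) (Fin 6) (ZMod 2)) f₂ = f₁ := by
  constructor
  · obtain ⟨ω, h0, h1, hq⟩ := omega_facts
    have h2 : (2 : GaloisField 2 2) = 0 := by
      have := CharP.cast_eq_zero (GaloisField 2 2) 2
      exact_mod_cast this
    exact ⟨⟨_, _, matAB ω h2, matBA ω h2⟩, polyId ω h2 hq⟩
  · rintro ⟨g, hg⟩
    have hf₁ : ∀ v : Fin 6 → ZMod 2, eval v f₁ = 0 := by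
      intro v
      have hsq : ∀ a : ZMod 2, a ^ 2 = a := by decide
      have h2 : (2 : ZMod 2) = 0 := by decide
      simp only [f₁, map_add, eval_mul, eval_pow, eval_X, hsq]
      linear_combination (v 0 * v 3 + v 1 * v 4 + v 2 * v 5) * h2
    set e : Fin 6 → ZMod 2 := fun i => if i = 0 then 1 else 0 with he
    have h1 : eval e f₂ = 1 := by simp [f₂, he]
    set v := ((g⁻¹ : GL (Fin 6) (ZMod 2)) : Matrix (Fin 6) (Fin 6) (ZMod 2)).mulVec e with hv
    have key := eval_linSub ((g : GL (Fin 6) (ZMod 2)) : Matrix (Fin 6) (Fin 6) (ZMod 2)) f₂ v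
    rw [hg, hf₁ v] at key
    have hAv : ((g : GL (Fin 6) (ZMod 2)) : Matrix (Fin 6) (Fin 6) (ZMod 2)).mulVec v = e := by
      rw [hv, Matrix.mulVec_mulVec]
      have : ((g : GL (Fin 6) (ZMod 2)) : Matrix (Fin 6) (Fin 6) (ZMod 2)) *
          ((g⁻¹ : GL (Fin 6) (ZMod 2)) : Matrix (Fin 6) (Fin 6) (ZMod 2)) = 1 := g.mul_inv
      rw [this, Matrix.one_mulVec]
    rw [hAv, h1] at key
    exact one_ne_zero key.symm
end
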